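/- arXiv:1209.5141 — 6 statements merged into one kernel-verified Lean document; each statement's English description precedes it below -/
import Mathlib

section
/- Let B be symmetric positive definite and G symmetric positive semidefinite with smallest eigenvalue at least θ_min > 0. Then for any nonzero s ∈ ℝⁿ, (sᵀB(B+G)⁻¹Bs)/(sᵀBs) ≤ 1/(1 + θ_min/λ_max(B)), where λ_max(B) is the largest eigenvalue of B. -/
/-!
With `c = θmin / lamMax`, the eigenvalue bounds give `c • B ≤ c • lamMax = θmin ≤ G` in the
Loewner order, hence `(1 + c) • B ≤ B + G`. Whenever `t • B ≤ A`, put `v = A⁻¹ B s`: then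
`(B s)ᵀ A⁻¹ (B s) = vᵀ B s = vᵀ A v ≥ t vᵀ B v`, and the weighted AM–GM inequality
`2 vᵀ B s ≤ t vᵀ B v + t⁻¹ sᵀ B s` for the semi-inner product of `B` leaves
`(B s)ᵀ A⁻¹ (B s) ≤ t⁻¹ sᵀ B s`.
-/

open Matrix
open scoped MatrixOrder

namespace Matrix

variable {ι : Type*} [Fintype ι]

lemma IsHermitian.dotProduct_mulVec_comm {B : Matrix ι ι ℝ} (hB : B.IsHermitian)
    (u v : ι → ℝ) : u ⬝ᵥ B *ᵥ v = v ⬝ᵥ B *ᵥ u := by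
  rw [dotProduct_mulVec, ← mulVec_transpose, ← conjTranspose_eq_transpose_of_trivial, hB.eq,
    dotProduct_comm]

lemma PosSemidef.two_mul_dotProduct_mulVec_le {B : Matrix ι ι ℝ} (hB : B.PosSemidef) {t : ℝ}
    (ht : 0 < t) (u v : ι → ℝ) :
    2 * (u ⬝ᵥ B *ᵥ v) ≤ t * (u ⬝ᵥ B *ᵥ u) + t⁻¹ * (v ⬝ᵥ B *ᵥ v) := by
  have hsq : 0 ≤ (t • u - v) ⬝ᵥ B *ᵥ (t • u - v) := by
    simpa using hB.dotProduct_mulVec_nonneg (t • u - v)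
  have hexpand : (t • u - v) ⬝ᵥ B *ᵥ (t • u - v) =
      t * (t * (u ⬝ᵥ B *ᵥ u) + t⁻¹ * (v ⬝ᵥ B *ᵥ v) - 2 * (u ⬝ᵥ B *ᵥ v)) := by
    simp only [mulVec_sub, mulVec_smul, dotProduct_sub, sub_dotProduct, dotProduct_smul,
      smul_dotProduct, smul_eq_mul, hB.1.dotProduct_mulVec_comm v u]
    field_simp
    ring
  rw [hexpand] at hsq
  linarith [(mul_nonneg_iff_of_pos_left ht).1 hsq]

variable [DecidableEq ι]

section RCLike

variable {𝕜 : Type*} [RCLike 𝕜] {A : Matrix ι ι 𝕜}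

lemma IsHermitian.algebraMap_le_of_le_eigenvalues (hA : A.IsHermitian) {r : ℝ}
    (h : ∀ i, r ≤ hA.eigenvalues i) : algebraMap ℝ _ r ≤ A :=
  algebraMap_le_of_le_spectrum (by
    rw [hA.spectrum_real_eq_range_eigenvalues]; rintro _ ⟨i, rfl⟩; exact h i) hA.isSelfAdjoint

lemma IsHermitian.le_algebraMap_of_eigenvalues_le (hA : A.IsHermitian) {r : ℝ}
    (h : ∀ i, hA.eigenvalues i ≤ r) : A ≤ algebraMap ℝ _ r :=
  le_algebraMap_of_spectrum_le (by
    rw [hA.spectrum_real_eq_range_eigenvalues]; rintro _ ⟨i, rfl⟩; exact h i) hA.isSelfAdjoint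

end RCLike

lemma dotProduct_inv_mulVec_le_of_smul_le {A B : Matrix ι ι ℝ} (hA : IsUnit A)
    (hB : B.PosSemidef) {t : ℝ} (ht : 0 < t) (hBA : t • B ≤ A) (s : ι → ℝ) :
    (B *ᵥ s) ⬝ᵥ A⁻¹ *ᵥ (B *ᵥ s) ≤ t⁻¹ * (s ⬝ᵥ B *ᵥ s) := by
  set v := A⁻¹ *ᵥ (B *ᵥ s)
  have hAv : A *ᵥ v = B *ᵥ s := by
    rw [mulVec_mulVec, mul_nonsing_inv _ ((isUnit_iff_isUnit_det A).1 hA), one_mulVec]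
  have hform : t * (v ⬝ᵥ B *ᵥ v) ≤ v ⬝ᵥ A *ᵥ v := by
    simpa [sub_mulVec, smul_mulVec] using (le_iff.1 hBA).dotProduct_mulVec_nonneg v
  rw [hAv] at hform
  rw [dotProduct_comm]
  linarith [hB.two_mul_dotProduct_mulVec_le ht v s]

end Matrix

theorem rayleigh_shifted_bound {n : ℕ} (B G : Matrix (Fin n) (Fin n) ℝ)
    (hB : B.PosDef) (hG : G.IsHermitian) (θmin : ℝ) (hθ : 0 < θmin)
    (heig : ∀ i, θmin ≤ hG.eigenvalues i)
    (lamMax : ℝ) (hlam : IsGreatest (Set.range hB.1.eigenvalues) lamMax)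
    (s : Fin n → ℝ) (hs : s ≠ 0) :
    ((B *ᵥ s) ⬝ᵥ (B + G)⁻¹ *ᵥ (B *ᵥ s)) / (s ⬝ᵥ B *ᵥ s) ≤
      1 / (1 + θmin / lamMax) := by
  obtain ⟨i, hi⟩ := hlam.1
  have hlamPos : 0 < lamMax := hi ▸ hB.eigenvalues_pos i
  have hBlam : B ≤ algebraMap ℝ _ lamMax :=
    hB.1.le_algebraMap_of_eigenvalues_le fun j ↦ hlam.2 ⟨j, rfl⟩
  have hGB : (θmin / lamMax) • B ≤ G := calc
    (θmin / lamMax) • B ≤ (θmin / lamMax) • algebraMap ℝ _ lamMax :=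
      smul_le_smul_of_nonneg_left hBlam (by positivity)
    _ = algebraMap ℝ _ θmin := by
      rw [Algebra.smul_def, ← map_mul, div_mul_cancel₀ _ hlamPos.ne']
    _ ≤ G := hG.algebraMap_le_of_le_eigenvalues heig
  have hBG : (1 + θmin / lamMax) • B ≤ B + G := by
    rw [add_smul, one_smul]
    gcongr
  have hGpsd : G.PosSemidef :=
    hG.posSemidef_iff_eigenvalues_nonneg.2 fun j ↦ hθ.le.trans (heig j)
  have hS : 0 < s ⬝ᵥ B *ᵥ s := by simpa using hB.dotProduct_mulVec_pos hs
  rw [div_le_iff₀ hS, one_div]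
  exact dotProduct_inv_mulVec_le_of_smul_le (hB.add_posSemidef hGpsd).isUnit hB.posSemidef
    (by positivity) hBG s
end

section
/- Let B be a symmetric positive definite n×n matrix, s ∈ ℝⁿ nonzero, and G symmetric positive definite with smallest eigenvalue ≥ θ_min > 0. Define u = Bs / √(sᵀBs). Then 1 - uᵀ(B+G)⁻¹u ≥ θ_min / (λ_max(B) + θ_min) > 0. -/
/-!
Put `w = Bs`, `y = (B + G)⁻¹w` and `q = wᵀ(B + G)⁻¹w`. Then `q = sᵀBy = yᵀ(B + G)y`, so
`q = 2 sᵀBy - yᵀ(B + G)y ≤ sᵀBs - (s - y)ᵀB(s - y) - θ‖y‖²` because `G ≥ θ`.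
Since `B ≤ λ`, an AM-GM estimate gives `θ sᵀBs ≤ (λ + θ)((s - y)ᵀB(s - y) + θ‖y‖²)`,
hence `(λ + θ) q ≤ λ sᵀBs`; dividing by `sᵀBs` is the normalisation `u = w / √(sᵀBs)`.
-/

open Matrix Unitary
open scoped ComplexOrder

namespace Matrix.IsHermitian

variable {n 𝕜 : Type*} [Fintype n] [DecidableEq n] [RCLike 𝕜] {A : Matrix n n 𝕜}

lemma sub_smul_one_eq_conjStarAlgAut (hA : A.IsHermitian) (c : ℝ) :
    A - (c : 𝕜) • 1 = conjStarAlgAut 𝕜 _ hA.eigenvectorUnitary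
      (diagonal fun i => ((hA.eigenvalues i - c : ℝ) : 𝕜)) := by
  conv_lhs => rw [hA.spectral_theorem]
  rw [← map_one (conjStarAlgAut 𝕜 _ hA.eigenvectorUnitary), ← map_smul, ← map_sub]
  congr 1
  ext i j
  by_cases h : i = j <;> simp [h, Algebra.algebraMap_eq_smul_one, sub_smul]

lemma posSemidef_sub_smul_one (hA : A.IsHermitian) {c : ℝ} (h : ∀ i, c ≤ hA.eigenvalues i) :
    (A - (c : 𝕜) • 1).PosSemidef := by
  rw [hA.sub_smul_one_eq_conjStarAlgAut, conjStarAlgAut_apply,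
    isUnit_coe.posSemidef_star_right_conjugate_iff, posSemidef_diagonal_iff]
  intro i
  simpa using h i

lemma posSemidef_smul_one_sub (hA : A.IsHermitian) {c : ℝ} (h : ∀ i, hA.eigenvalues i ≤ c) :
    ((c : 𝕜) • 1 - A).PosSemidef := by
  rw [← neg_sub, hA.sub_smul_one_eq_conjStarAlgAut, ← map_neg, conjStarAlgAut_apply,
    diagonal_neg, isUnit_coe.posSemidef_star_right_conjugate_iff, posSemidef_diagonal_iff]
  intro i
  simpa using h i

end Matrix.IsHermitian

namespace Matrix

variable {n : Type*} [Fintype n]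

lemma IsSymm.dotProduct_mulVec_comm {R : Type*} [CommSemiring R] {A : Matrix n n R}
    (hA : A.IsSymm) (x y : n → R) : x ⬝ᵥ A *ᵥ y = y ⬝ᵥ A *ᵥ x := by
  rw [dotProduct_mulVec, ← mulVec_transpose, dotProduct_comm, hA.eq]

lemma dotProduct_mulVec_nonsing_inv_eq {R : Type*} [CommRing R] [DecidableEq n]
    {A : Matrix n n R} (hA : IsUnit A) (w : n → R) :
    w ⬝ᵥ A⁻¹ *ᵥ w = (A⁻¹ *ᵥ w) ⬝ᵥ A *ᵥ (A⁻¹ *ᵥ w) := by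
  rw [mulVec_mulVec, mul_nonsing_inv _ ((isUnit_iff_isUnit_det A).mp hA), one_mulVec,
    dotProduct_comm]

lemma dotProduct_smul_one_mulVec [DecidableEq n] (c : ℝ) (x : n → ℝ) :
    x ⬝ᵥ (c • 1 : Matrix n n ℝ) *ᵥ x = c * (x ⬝ᵥ x) := by
  rw [smul_mulVec, one_mulVec, dotProduct_smul, smul_eq_mul]

lemma PosSemidef.dotProduct_mulVec_le_of_sub {A B : Matrix n n ℝ} (h : (B - A).PosSemidef)
    (x : n → ℝ) : x ⬝ᵥ A *ᵥ x ≤ x ⬝ᵥ B *ᵥ x := by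
  have := h.dotProduct_mulVec_nonneg x
  rw [star_trivial, sub_mulVec, dotProduct_sub] at this
  linarith

/-- AM-GM in the form `2λθ aᵀBz ≤ λ² aᵀBa + θ² zᵀBz`, with `a = s - z`, followed by `B ≤ λ`. -/
lemma PosSemidef.mul_dotProduct_mulVec_le_of_le_smul_one [DecidableEq n] {B : Matrix n n ℝ}
    (hB : B.PosSemidef) {lam θ : ℝ} (hlam : 0 < lam) (hθ : 0 ≤ θ)
    (hBle : (lam • 1 - B).PosSemidef) (s z : n → ℝ) :
    θ * (s ⬝ᵥ B *ᵥ s) ≤ (lam + θ) * ((s - z) ⬝ᵥ B *ᵥ (s - z) + θ * (z ⬝ᵥ z)) := by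
  set a := s - z
  have hs : s = a + z := by simp [a]
  have hsymm := (isHermitian_iff_isSymm.mp hB.1).dotProduct_mulVec_comm z a
  have hyoung := hB.dotProduct_mulVec_nonneg (lam • a - θ • z)
  simp only [star_trivial, mulVec_sub, mulVec_smul, dotProduct_sub, sub_dotProduct,
    dotProduct_smul, smul_dotProduct, smul_eq_mul] at hyoung
  have hz := hBle.dotProduct_mulVec_le_of_sub z
  rw [dotProduct_smul_one_mulVec] at hz
  rw [hs, mulVec_add, dotProduct_add, add_dotProduct, add_dotProduct]
  nlinarith [mul_le_mul_of_nonneg_left hz (by positivity : 0 ≤ θ * (lam + θ))]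

lemma PosSemidef.mul_dotProduct_mulVec_add_inv_le [DecidableEq n] {B G : Matrix n n ℝ}
    (hB : B.PosSemidef) {lam θ : ℝ} (hlam : 0 < lam) (hθ : 0 < θ)
    (hBle : (lam • 1 - B).PosSemidef) (hGge : (G - θ • 1).PosSemidef) (s : n → ℝ) :
    (lam + θ) * ((B *ᵥ s) ⬝ᵥ (B + G)⁻¹ *ᵥ (B *ᵥ s)) ≤ lam * (s ⬝ᵥ B *ᵥ s) := by
  have hA : (B + G).PosDef := by
    convert (PosDef.one.smul hθ).add_posSemidef (hB.add hGge) using 1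
    abel
  have hBsymm := isHermitian_iff_isSymm.mp hB.1
  set y := (B + G)⁻¹ *ᵥ (B *ᵥ s)
  have hq_quad : (B *ᵥ s) ⬝ᵥ y = y ⬝ᵥ B *ᵥ y + y ⬝ᵥ G *ᵥ y := by
    rw [← dotProduct_add, ← add_mulVec]
    exact dotProduct_mulVec_nonsing_inv_eq hA.isUnit (B *ᵥ s)
  have hq_lin : (B *ᵥ s) ⬝ᵥ y = s ⬝ᵥ B *ᵥ y := by
    rw [dotProduct_comm, hBsymm.dotProduct_mulVec_comm]
  have hsymm := hBsymm.dotProduct_mulVec_comm s y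
  have hGy := hGge.dotProduct_mulVec_le_of_sub y
  rw [dotProduct_smul_one_mulVec] at hGy
  have hq_le : (B *ᵥ s) ⬝ᵥ y ≤
      s ⬝ᵥ B *ᵥ s - ((s - y) ⬝ᵥ B *ᵥ (s - y) + θ * (y ⬝ᵥ y)) := by
    rw [mulVec_sub, dotProduct_sub, sub_dotProduct, sub_dotProduct]
    linarith
  calc (lam + θ) * ((B *ᵥ s) ⬝ᵥ y)
      ≤ (lam + θ) * (s ⬝ᵥ B *ᵥ s - ((s - y) ⬝ᵥ B *ᵥ (s - y) + θ * (y ⬝ᵥ y))) := by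
        gcongr
    _ ≤ lam * (s ⬝ᵥ B *ᵥ s) := by
        linarith [hB.mul_dotProduct_mulVec_le_of_le_smul_one hlam hθ.le hBle s y]

end Matrix

theorem shifted_quadratic_lower_bound {n : ℕ} (B G : Matrix (Fin n) (Fin n) ℝ)
    (hB : B.PosDef) (hG : G.IsHermitian) (θmin : ℝ) (hθ : 0 < θmin)
    (heig : ∀ i, θmin ≤ hG.eigenvalues i)
    (lamMax : ℝ) (hlam : IsGreatest (Set.range hB.1.eigenvalues) lamMax)
    (s : Fin n → ℝ) (hs : s ≠ 0) :
    θmin / (lamMax + θmin) ≤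
      1 - ((Real.sqrt (s ⬝ᵥ B *ᵥ s))⁻¹ • (B *ᵥ s)) ⬝ᵥ
            (B + G)⁻¹ *ᵥ ((Real.sqrt (s ⬝ᵥ B *ᵥ s))⁻¹ • (B *ᵥ s)) ∧
    0 < θmin / (lamMax + θmin) := by
  obtain ⟨j, hj⟩ := hlam.1
  have hlam_pos : 0 < lamMax := hj ▸ hB.eigenvalues_pos j
  have hsBs : 0 < s ⬝ᵥ B *ᵥ s := by simpa using hB.dotProduct_mulVec_pos hs
  have hbound := hB.posSemidef.mul_dotProduct_mulVec_add_inv_le hlam_pos hθ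
    (hB.1.posSemidef_smul_one_sub fun i => hlam.2 ⟨i, rfl⟩) (hG.posSemidef_sub_smul_one heig) s
  set q := (B *ᵥ s) ⬝ᵥ (B + G)⁻¹ *ᵥ (B *ᵥ s)
  have hu : ((Real.sqrt (s ⬝ᵥ B *ᵥ s))⁻¹ • (B *ᵥ s)) ⬝ᵥ
      (B + G)⁻¹ *ᵥ ((Real.sqrt (s ⬝ᵥ B *ᵥ s))⁻¹ • (B *ᵥ s)) = q / (s ⬝ᵥ B *ᵥ s) := by
    rw [mulVec_smul, smul_dotProduct, dotProduct_smul, smul_eq_mul, smul_eq_mul, ← mul_assoc,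
      ← mul_inv, Real.mul_self_sqrt hsBs.le, inv_mul_eq_div]
  have hq : q / (s ⬝ᵥ B *ᵥ s) ≤ lamMax / (lamMax + θmin) := by
    rw [div_le_div_iff₀ hsBs (by positivity)]
    linarith
  refine ⟨?_, by positivity⟩
  rw [hu, show θmin / (lamMax + θmin) = 1 - lamMax / (lamMax + θmin) by field_simp; ring]
  linarith
end

section
/- (Lemma 1 of the paper.) Let γ > 0 and let B₀ = γ⁻¹I and B_{j+1} be BFGS updates with pairs (s_ℓ, y_ℓ) satisfying y_ℓᵀ s_ℓ ≥ δ > 0 for all ℓ. Let G be symmetric positive definite with all eigenvalues ≥ θ_min > 0, and set u = B_j s_j / √(s_jᵀ B_j s_j) and C = B_j + G. Then 1 - uᵀ C⁻¹ u ≥ θ_min / (γ⁻¹ + (Σ_{ℓ=0}^{j-1} ‖y_ℓ‖²)/δ + θ_min) > 0. -/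
/-!
BFGS updates preserve positive semidefiniteness, and the update with the pair `(s, y)` raises the
Rayleigh quotient by at most `‖y‖² / (yᵀ s) ≤ ‖y‖² / δ`, so `0 ≤ B_j ≤ M I` with
`M = γ⁻¹ + Σ_{ℓ<j} ‖y_ℓ‖² / δ`. Cauchy–Schwarz for the semi-inner product of `B_j` gives
`(uᵀ v)² ≤ vᵀ B_j v` for all `v`. Writing `v = C⁻¹ u` and `t = uᵀ C⁻¹ u = vᵀ B_j v + vᵀ G v`,
this yields `t² ≤ vᵀ B_j v ≤ M ‖v‖²` while `vᵀ G v ≥ θ_min ‖v‖²`, hence `(M + θ_min) t² ≤ M t`,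
i.e. `t ≤ M / (M + θ_min)`.
-/

open Matrix
open scoped MatrixOrder

variable {ι : Type*} [Fintype ι]

theorem Matrix.PosSemidef.dotProduct_mulVec_self_nonneg {B : Matrix ι ι ℝ} (hB : B.PosSemidef)
    (x : ι → ℝ) : 0 ≤ x ⬝ᵥ B *ᵥ x := by
  simpa using hB.dotProduct_mulVec_nonneg x

theorem Matrix.PosSemidef.sq_dotProduct_mulVec_le {B : Matrix ι ι ℝ} (hB : B.PosSemidef)
    (x y : ι → ℝ) : (x ⬝ᵥ B *ᵥ y) ^ 2 ≤ (x ⬝ᵥ B *ᵥ x) * (y ⬝ᵥ B *ᵥ y) := by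
  let _ := B.toSeminormedAddCommGroup hB
  let _ := B.toInnerProductSpace hB
  have inner_eq (u v : ι → ℝ) : inner ℝ u v = u ⬝ᵥ B *ᵥ v := by rw [dotProduct_comm]; rfl
  simpa only [inner_eq, sq] using real_inner_mul_inner_self_le x y

theorem Matrix.PosSemidef.sq_dotProduct_mulVec_div_le {B : Matrix ι ι ℝ} (hB : B.PosSemidef)
    (s x : ι → ℝ) : (s ⬝ᵥ B *ᵥ x) ^ 2 / (s ⬝ᵥ B *ᵥ s) ≤ x ⬝ᵥ B *ᵥ x :=
  div_le_of_le_mul₀ (hB.dotProduct_mulVec_self_nonneg s) (hB.dotProduct_mulVec_self_nonneg x)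
    (by simpa only [mul_comm] using hB.sq_dotProduct_mulVec_le s x)

theorem Matrix.IsHermitian.dotProduct_mulVec_comm_s8 {B : Matrix ι ι ℝ} (hB : B.IsHermitian)
    (x y : ι → ℝ) : x ⬝ᵥ B *ᵥ y = y ⬝ᵥ B *ᵥ x := by
  have hBt : Bᵀ = B := hB.eq
  rw [dotProduct_mulVec, ← mulVec_transpose, hBt, dotProduct_comm]

theorem Matrix.PosSemidef.sq_inv_sqrt_smul_mulVec_dotProduct_le {B : Matrix ι ι ℝ}
    (hB : B.PosSemidef) (s v : ι → ℝ) :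
    (((√(s ⬝ᵥ B *ᵥ s))⁻¹ • (B *ᵥ s)) ⬝ᵥ v) ^ 2 ≤ v ⬝ᵥ B *ᵥ v := by
  have hsq : (√(s ⬝ᵥ B *ᵥ s))⁻¹ ^ 2 = 1 / (s ⬝ᵥ B *ᵥ s) := by
    rw [inv_pow, Real.sq_sqrt (hB.dotProduct_mulVec_self_nonneg s), one_div]
  calc (((√(s ⬝ᵥ B *ᵥ s))⁻¹ • (B *ᵥ s)) ⬝ᵥ v) ^ 2
      = (s ⬝ᵥ B *ᵥ v) ^ 2 / (s ⬝ᵥ B *ᵥ s) := by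
        rw [smul_dotProduct, smul_eq_mul, mul_pow, hsq, dotProduct_comm (B *ᵥ s),
          hB.1.dotProduct_mulVec_comm_s8 v s, one_div_mul_eq_div]
    _ ≤ v ⬝ᵥ B *ᵥ v := hB.sq_dotProduct_mulVec_div_le s v

theorem Matrix.IsHermitian.mul_dotProduct_self_le_dotProduct_mulVec [DecidableEq ι]
    {G : Matrix ι ι ℝ} (hG : G.IsHermitian) {θ : ℝ} (hθ : ∀ i, θ ≤ hG.eigenvalues i) (x : ι → ℝ) :
    θ * (x ⬝ᵥ x) ≤ x ⬝ᵥ G *ᵥ x := by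
  have hle : algebraMap ℝ (Matrix ι ι ℝ) θ ≤ G := by
    rw [algebraMap_le_iff_le_spectrum (ha := hG.isSelfAdjoint),
      hG.spectrum_real_eq_range_eigenvalues]
    rintro _ ⟨i, rfl⟩
    exact hθ i
  simpa [sub_mulVec, Algebra.algebraMap_eq_smul_one, smul_mulVec] using
    (Matrix.le_iff.mp hle).dotProduct_mulVec_nonneg x

theorem dotProduct_inv_add_mulVec_mul_le [DecidableEq ι] {B G : Matrix ι ι ℝ} {u : ι → ℝ}
    {M θ : ℝ} (hM : 0 ≤ M) (hθ : 0 ≤ θ) (huB : ∀ v, (u ⬝ᵥ v) ^ 2 ≤ v ⬝ᵥ B *ᵥ v)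
    (hBM : ∀ v, v ⬝ᵥ B *ᵥ v ≤ M * (v ⬝ᵥ v)) (hGθ : ∀ v, θ * (v ⬝ᵥ v) ≤ v ⬝ᵥ G *ᵥ v) :
    (u ⬝ᵥ (B + G)⁻¹ *ᵥ u) * (M + θ) ≤ M := by
  by_cases hC : IsUnit (B + G).det
  swap
  · simp [nonsing_inv_apply_not_isUnit _ hC, hM]
  set v := (B + G)⁻¹ *ᵥ u
  have huv : u ⬝ᵥ v = v ⬝ᵥ B *ᵥ v + v ⬝ᵥ G *ᵥ v := by
    have hu : u = (B + G) *ᵥ v := by rw [mulVec_mulVec, mul_nonsing_inv _ hC, one_mulVec]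
    conv_lhs => rw [hu]
    rw [dotProduct_comm, add_mulVec, dotProduct_add]
  have hBG : θ * (v ⬝ᵥ B *ᵥ v) ≤ M * (v ⬝ᵥ G *ᵥ v) := by nlinarith [hBM v, hGθ v]
  have hsq : (u ⬝ᵥ v) ^ 2 * (M + θ) ≤ M * (u ⬝ᵥ v) := by nlinarith [huB v]
  rcases le_or_gt (u ⬝ᵥ v) 0 with ht | ht
  · nlinarith
  · nlinarith

noncomputable def bfgsUpdate (B : Matrix ι ι ℝ) (s y : ι → ℝ) : Matrix ι ι ℝ :=
  B - (1 / (s ⬝ᵥ B *ᵥ s)) • (B * vecMulVec s s * B) + (1 / (y ⬝ᵥ s)) • vecMulVec y y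

theorem isHermitian_bfgsUpdate {B : Matrix ι ι ℝ} (hB : B.IsHermitian) (s y : ι → ℝ) :
    (bfgsUpdate B s y).IsHermitian := by
  have hBt : Bᵀ = B := hB.eq
  simp [IsHermitian, bfgsUpdate, hBt, Matrix.mul_assoc]

theorem dotProduct_mulVec_bfgsUpdate {B : Matrix ι ι ℝ} (hB : B.IsHermitian)
    (s y x : ι → ℝ) :
    x ⬝ᵥ bfgsUpdate B s y *ᵥ x =
      x ⬝ᵥ B *ᵥ x - (s ⬝ᵥ B *ᵥ x) ^ 2 / (s ⬝ᵥ B *ᵥ s) + (y ⬝ᵥ x) ^ 2 / (y ⬝ᵥ s) := by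
  simp only [bfgsUpdate, add_mulVec, sub_mulVec, smul_mulVec, ← mulVec_mulVec,
    vecMulVec_mulVec, dotProduct_add, dotProduct_sub, dotProduct_smul, mulVec_smul]
  rw [hB.dotProduct_mulVec_comm_s8 x s, dotProduct_comm x y]
  simp only [smul_eq_mul, MulOpposite.smul_eq_mul_unop, MulOpposite.unop_op]
  ring

theorem posSemidef_bfgsUpdate {B : Matrix ι ι ℝ} (hB : B.PosSemidef) {s y : ι → ℝ}
    (hys : 0 ≤ y ⬝ᵥ s) : (bfgsUpdate B s y).PosSemidef := by
  refine .of_dotProduct_mulVec_nonneg (isHermitian_bfgsUpdate hB.1 s y) fun x => ?_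
  rw [star_trivial, dotProduct_mulVec_bfgsUpdate hB.1]
  have hdrop := hB.sq_dotProduct_mulVec_div_le s x
  have hnew : 0 ≤ (y ⬝ᵥ x) ^ 2 / (y ⬝ᵥ s) := by positivity
  linarith

theorem dotProduct_mulVec_bfgsUpdate_le {B : Matrix ι ι ℝ} (hB : B.PosSemidef)
    {s y : ι → ℝ} {δ : ℝ} (hδ : 0 < δ) (hys : δ ≤ y ⬝ᵥ s) (x : ι → ℝ) :
    x ⬝ᵥ bfgsUpdate B s y *ᵥ x ≤ x ⬝ᵥ B *ᵥ x + (y ⬝ᵥ y) / δ * (x ⬝ᵥ x) := by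
  rw [dotProduct_mulVec_bfgsUpdate hB.1]
  have hdrop : 0 ≤ (s ⬝ᵥ B *ᵥ x) ^ 2 / (s ⬝ᵥ B *ᵥ s) :=
    div_nonneg (sq_nonneg _) (hB.dotProduct_mulVec_self_nonneg s)
  have hcs : (y ⬝ᵥ x) ^ 2 ≤ (y ⬝ᵥ y) * (x ⬝ᵥ x) := by
    simpa only [dotProduct, sq] using Finset.sum_mul_sq_le_sq_mul_sq Finset.univ y x
  have hnew : (y ⬝ᵥ x) ^ 2 / (y ⬝ᵥ s) ≤ (y ⬝ᵥ y) / δ * (x ⬝ᵥ x) := by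
    rw [div_mul_eq_mul_div]
    exact (div_le_div_of_nonneg_left (sq_nonneg _) hδ hys).trans
      (div_le_div_of_nonneg_right hcs hδ.le)
  linarith

section Iterates

variable {B : ℕ → Matrix ι ι ℝ} {s y : ℕ → ι → ℝ}

theorem posSemidef_of_bfgsUpdate_iterate (hB0 : (B 0).PosSemidef) {j : ℕ}
    (hrec : ∀ ℓ < j, B (ℓ + 1) = bfgsUpdate (B ℓ) (s ℓ) (y ℓ))
    (hys : ∀ ℓ < j, 0 ≤ y ℓ ⬝ᵥ s ℓ) : (B j).PosSemidef := by
  induction j with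
  | zero => exact hB0
  | succ j ih =>
    rw [hrec j j.lt_succ_self]
    exact posSemidef_bfgsUpdate (ih (fun ℓ hℓ => hrec ℓ (hℓ.trans j.lt_succ_self))
      (fun ℓ hℓ => hys ℓ (hℓ.trans j.lt_succ_self))) (hys j j.lt_succ_self)

theorem dotProduct_mulVec_bfgsUpdate_iterate_le (hB0 : (B 0).PosSemidef) {c δ : ℝ}
    (hc : ∀ x, x ⬝ᵥ B 0 *ᵥ x ≤ c * (x ⬝ᵥ x)) (hδ : 0 < δ) {j : ℕ}
    (hrec : ∀ ℓ < j, B (ℓ + 1) = bfgsUpdate (B ℓ) (s ℓ) (y ℓ))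
    (hys : ∀ ℓ < j, δ ≤ y ℓ ⬝ᵥ s ℓ) (x : ι → ℝ) :
    x ⬝ᵥ B j *ᵥ x ≤ (c + (∑ ℓ ∈ Finset.range j, y ℓ ⬝ᵥ y ℓ) / δ) * (x ⬝ᵥ x) := by
  induction j with
  | zero => simpa using hc x
  | succ j ih =>
    have hrec' ℓ (hℓ : ℓ < j) := hrec ℓ (hℓ.trans j.lt_succ_self)
    have hys' ℓ (hℓ : ℓ < j) := hys ℓ (hℓ.trans j.lt_succ_self)
    have hBj := posSemidef_of_bfgsUpdate_iterate hB0 hrec' fun ℓ hℓ => hδ.le.trans (hys' ℓ hℓ)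
    calc x ⬝ᵥ B (j + 1) *ᵥ x
        ≤ x ⬝ᵥ B j *ᵥ x + (y j ⬝ᵥ y j) / δ * (x ⬝ᵥ x) := by
          rw [hrec j j.lt_succ_self]
          exact dotProduct_mulVec_bfgsUpdate_le hBj hδ (hys j j.lt_succ_self) x
      _ ≤ (c + (∑ ℓ ∈ Finset.range j, y ℓ ⬝ᵥ y ℓ) / δ) * (x ⬝ᵥ x)
            + (y j ⬝ᵥ y j) / δ * (x ⬝ᵥ x) := by
          gcongr
          exact ih hrec' hys'
      _ = _ := by rw [Finset.sum_range_succ]; ring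

end Iterates

theorem lemma1_shifted_lbfgs_general {n j : ℕ} (γ δ θmin : ℝ) (hγ : 0 < γ) (hδ : 0 < δ)
    (hθ : 0 < θmin)
    (s y : ℕ → (Fin n → ℝ)) (B : ℕ → Matrix (Fin n) (Fin n) ℝ)
    (hB0 : B 0 = γ⁻¹ • (1 : Matrix (Fin n) (Fin n) ℝ))
    (hrec : ∀ ℓ < j, B (ℓ + 1) =
      B ℓ - (1 / (s ℓ ⬝ᵥ B ℓ *ᵥ s ℓ)) • (B ℓ * vecMulVec (s ℓ) (s ℓ) * B ℓ)
          + (1 / (y ℓ ⬝ᵥ s ℓ)) • vecMulVec (y ℓ) (y ℓ))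
    (hys : ∀ ℓ ≤ j, δ ≤ y ℓ ⬝ᵥ s ℓ)
    (G : Matrix (Fin n) (Fin n) ℝ) (hG : G.IsHermitian)
    (heig : ∀ i, θmin ≤ hG.eigenvalues i) :
    θmin / (γ⁻¹ + (∑ ℓ ∈ Finset.range j, y ℓ ⬝ᵥ y ℓ) / δ + θmin) ≤
      1 - ((Real.sqrt (s j ⬝ᵥ B j *ᵥ s j))⁻¹ • (B j *ᵥ s j)) ⬝ᵥ
            (B j + G)⁻¹ *ᵥ ((Real.sqrt (s j ⬝ᵥ B j *ᵥ s j))⁻¹ • (B j *ᵥ s j)) ∧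
    0 < θmin / (γ⁻¹ + (∑ ℓ ∈ Finset.range j, y ℓ ⬝ᵥ y ℓ) / δ + θmin) := by
  have hys' ℓ (hℓ : ℓ < j) := hys ℓ hℓ.le
  have hB0psd : (B 0).PosSemidef := hB0 ▸ PosSemidef.one.smul (inv_nonneg.mpr hγ.le)
  have hBj := posSemidef_of_bfgsUpdate_iterate hB0psd hrec fun ℓ hℓ => hδ.le.trans (hys' ℓ hℓ)
  have hBjM := dotProduct_mulVec_bfgsUpdate_iterate_le hB0psd (c := γ⁻¹)
    (fun x => by simp [hB0, smul_mulVec]) hδ hrec hys'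
  set M := γ⁻¹ + (∑ ℓ ∈ Finset.range j, y ℓ ⬝ᵥ y ℓ) / δ
  have hM : 0 < M := by
    have hsum : 0 ≤ ∑ ℓ ∈ Finset.range j, y ℓ ⬝ᵥ y ℓ :=
      Finset.sum_nonneg fun ℓ _ => by simpa using dotProduct_self_star_nonneg (y ℓ)
    positivity
  have key := dotProduct_inv_add_mulVec_mul_le hM.le hθ.le
    (hBj.sq_inv_sqrt_smul_mulVec_dotProduct_le (s j)) hBjM
    (hG.mul_dotProduct_self_le_dotProduct_mulVec heig)
  refine ⟨?_, by positivity⟩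
  rw [div_le_iff₀ (by positivity)]
  linarith

theorem lemma1_shifted_lbfgs {n j : ℕ} (γ δ θmin : ℝ) (hγ : 0 < γ) (hδ : 0 < δ)
    (hθ : 0 < θmin)
    (s y : ℕ → (Fin n → ℝ)) (B : ℕ → Matrix (Fin n) (Fin n) ℝ)
    (hB0 : B 0 = γ⁻¹ • (1 : Matrix (Fin n) (Fin n) ℝ))
    (hrec : ∀ ℓ < j, B (ℓ + 1) =
      B ℓ - (1 / (s ℓ ⬝ᵥ B ℓ *ᵥ s ℓ)) • (B ℓ * vecMulVec (s ℓ) (s ℓ) * B ℓ)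
          + (1 / (y ℓ ⬝ᵥ s ℓ)) • vecMulVec (y ℓ) (y ℓ))
    (hys : ∀ ℓ ≤ j, δ ≤ y ℓ ⬝ᵥ s ℓ) (hs : ∀ ℓ ≤ j, s ℓ ≠ 0)
    (G : Matrix (Fin n) (Fin n) ℝ) (hG : G.IsHermitian)
    (heig : ∀ i, θmin ≤ hG.eigenvalues i) :
    θmin / (γ⁻¹ + (∑ ℓ ∈ Finset.range j, y ℓ ⬝ᵥ y ℓ) / δ + θmin) ≤
      1 - ((Real.sqrt (s j ⬝ᵥ B j *ᵥ s j))⁻¹ • (B j *ᵥ s j)) ⬝ᵥ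
            (B j + G)⁻¹ *ᵥ ((Real.sqrt (s j ⬝ᵥ B j *ᵥ s j))⁻¹ • (B j *ᵥ s j)) ∧
    0 < θmin / (γ⁻¹ + (∑ ℓ ∈ Finset.range j, y ℓ ⬝ᵥ y ℓ) / δ + θmin) :=
  lemma1_shifted_lbfgs_general γ δ θmin hγ hδ hθ s y B hB0 hrec hys G hG heig
end

section
/- Let H be symmetric, A an m×n matrix, and D symmetric positive definite. A pair (x₁, x₂) solves the KKT system [[H, -Aᵀ],[A, D]](x₁;x₂) = (b₁;b₂) if and only if it solves the doubly-augmented system [[H + 2AᵀD⁻¹A, Aᵀ],[A, D]](x₁;x₂) = (b₁ + 2AᵀD⁻¹b₂; b₂). -/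
open Matrix

theorem kkt_iff_doubly_augmented {n m : ℕ}
    (H : Matrix (Fin n) (Fin n) ℝ) (A : Matrix (Fin m) (Fin n) ℝ)
    (D : Matrix (Fin m) (Fin m) ℝ)
    (hH : H.IsHermitian) (hD : D.PosDef)
    (x₁ b₁ : Fin n → ℝ) (x₂ b₂ : Fin m → ℝ) :
    (H *ᵥ x₁ - Aᵀ *ᵥ x₂ = b₁ ∧ A *ᵥ x₁ + D *ᵥ x₂ = b₂) ↔
    ((H + (2 : ℝ) • (Aᵀ * D⁻¹ * A)) *ᵥ x₁ + Aᵀ *ᵥ x₂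
        = b₁ + (2 : ℝ) • (Aᵀ *ᵥ (D⁻¹ *ᵥ b₂)) ∧
      A *ᵥ x₁ + D *ᵥ x₂ = b₂) := by
  have hDet : IsUnit D.det := hD.det_pos.ne'.isUnit
  have expand : ∀ h2 : A *ᵥ x₁ + D *ᵥ x₂ = b₂,
      D⁻¹ *ᵥ b₂ = D⁻¹ *ᵥ (A *ᵥ x₁) + x₂ := by
    intro h2
    rw [← h2, mulVec_add, mulVec_mulVec, mulVec_mulVec, nonsing_inv_mul D hDet, one_mulVec]
  constructor
  · rintro ⟨h1, h2⟩
    refine ⟨?_, h2⟩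
    rw [expand h2, add_mulVec, smul_mulVec, ← mulVec_mulVec, ← mulVec_mulVec, ← h1]
    rw [mulVec_add]
    module
  · rintro ⟨h1, h2⟩
    refine ⟨?_, h2⟩
    rw [expand h2, mulVec_add] at h1
    rw [add_mulVec, smul_mulVec, ← mulVec_mulVec, ← mulVec_mulVec] at h1
    have := h1
    linear_combination (norm := module) this
end

section
/- Under the setup of the SMW recursion (C_{i+1} = C_i + (-1)^{i+1}u_i u_iᵀ with each C_i invertible and 1 + (-1)^{i+1}u_iᵀC_i⁻¹u_i ≠ 0), the vectors p_i = C_i⁻¹u_i satisfy the recursion p_i = C₀⁻¹ u_i + Σ_{j=0}^{i-1} (-1)^j τ_j (p_jᵀ u_i) p_j, where τ_j = 1/(1 + (-1)^{j+1} u_jᵀ p_j). -/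
open Matrix

private lemma vecMulVec_mulVec' {n : ℕ} (w v x : Fin n → ℝ) :
    vecMulVec w v *ᵥ x = (v ⬝ᵥ x) • w := by
  ext i
  simp [vecMulVec_apply, mulVec, dotProduct, Finset.mul_sum, mul_comm, mul_left_comm]

private lemma transpose_vecMulVec' {n : ℕ} (v : Fin n → ℝ) :
    (vecMulVec v v)ᵀ = vecMulVec v v := by
  ext i j
  simp [vecMulVec_apply, mul_comm]

/-- Sherman–Morrison step at the level of `mulVec`. -/
private lemma sm_step {n : ℕ} (A : Matrix (Fin n) (Fin n) ℝ) (c : ℝ) (u v : Fin n → ℝ)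
    (hA : IsUnit A) (hAt : Aᵀ = A)
    (hB : IsUnit (A + c • vecMulVec u u))
    (hd : 1 + c * (u ⬝ᵥ A⁻¹ *ᵥ u) ≠ 0) :
    (A + c • vecMulVec u u)⁻¹ *ᵥ v
      = A⁻¹ *ᵥ v + (-c * (1 + c * (u ⬝ᵥ A⁻¹ *ᵥ u))⁻¹ * (A⁻¹ *ᵥ u ⬝ᵥ v)) • (A⁻¹ *ᵥ u) := by
  have hAdet : IsUnit A.det := (Matrix.isUnit_iff_isUnit_det A).mp hA
  have hBdet : IsUnit (A + c • vecMulVec u u).det := (Matrix.isUnit_iff_isUnit_det _).mp hB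
  have hAinv : A * A⁻¹ = 1 := Matrix.mul_nonsing_inv A hAdet
  -- symmetry of A⁻¹
  have hAinvT : (A⁻¹)ᵀ = A⁻¹ := by
    rw [Matrix.transpose_nonsing_inv, hAt]
  have hswap : ∀ w : Fin n → ℝ, u ⬝ᵥ A⁻¹ *ᵥ w = A⁻¹ *ᵥ u ⬝ᵥ w := by
    intro w
    rw [Matrix.dotProduct_mulVec, ← Matrix.mulVec_transpose, hAinvT]
  set s : ℝ := u ⬝ᵥ A⁻¹ *ᵥ u with hs
  set t : ℝ := A⁻¹ *ᵥ u ⬝ᵥ v with ht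
  set α : ℝ := -c * (1 + c * s)⁻¹ * t with hα
  set w : Fin n → ℝ := A⁻¹ *ᵥ v + α • (A⁻¹ *ᵥ u) with hw
  have hBw : (A + c • vecMulVec u u) *ᵥ w = v := by
    have h1 : A *ᵥ (A⁻¹ *ᵥ v) = v := by
      rw [Matrix.mulVec_mulVec, hAinv, Matrix.one_mulVec]
    have h2 : A *ᵥ (A⁻¹ *ᵥ u) = u := by
      rw [Matrix.mulVec_mulVec, hAinv, Matrix.one_mulVec]
    have hcoef : α + c * (t + α * s) = 0 := by
      have : α * (1 + c * s) = -c * t := by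
        rw [hα]
        field_simp
      nlinarith [this]
    rw [Matrix.add_mulVec, Matrix.smul_mulVec, vecMulVec_mulVec']
    have hs' : A⁻¹ *ᵥ u ⬝ᵥ u = s := (hswap u).symm
    rw [hw, Matrix.mulVec_add, Matrix.mulVec_smul, h1, h2, dotProduct_add,
      dotProduct_smul, hswap v, ← ht, ← hs]
    have hz : α • u + c • (t + α • s) • u = 0 := by
      rw [smul_eq_mul, smul_smul, ← add_smul, hcoef, zero_smul]
    rw [add_assoc, hz, add_zero]
  calc (A + c • vecMulVec u u)⁻¹ *ᵥ v
      = (A + c • vecMulVec u u)⁻¹ *ᵥ ((A + c • vecMulVec u u) *ᵥ w) := by rw [hBw]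
    _ = w := by
        rw [Matrix.mulVec_mulVec, Matrix.nonsing_inv_mul _ hBdet, Matrix.one_mulVec]

theorem smw_recursion_p {n k : ℕ}
    (C : ℕ → Matrix (Fin n) (Fin n) ℝ) (u : ℕ → (Fin n → ℝ))
    (hC0 : (C 0).PosDef)
    (hrec : ∀ i < 2 * k, C (i + 1)
      = C i + ((-1 : ℝ) ^ (i + 1)) • vecMulVec (u i) (u i))
    (hinv : ∀ i ≤ 2 * k, IsUnit (C i))
    (hden : ∀ i < 2 * k, 1 + (-1 : ℝ) ^ (i + 1) * (u i ⬝ᵥ (C i)⁻¹ *ᵥ u i) ≠ 0) :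
    ∀ i < 2 * k, (C i)⁻¹ *ᵥ u i = (C 0)⁻¹ *ᵥ u i +
      ∑ j ∈ Finset.range i,
        ((-1 : ℝ) ^ j * (1 + (-1 : ℝ) ^ (j + 1) * (u j ⬝ᵥ (C j)⁻¹ *ᵥ u j))⁻¹
          * ((C j)⁻¹ *ᵥ u j ⬝ᵥ u i)) • ((C j)⁻¹ *ᵥ u j) := by
  -- symmetry of each C i
  have hsym : ∀ i ≤ 2 * k, (C i)ᵀ = C i := by
    intro i
    induction i with
    | zero => intro _; exact hC0.isHermitian.eq
    | succ m ih =>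
        intro hm
        have hm' : m < 2 * k := lt_of_lt_of_le (Nat.lt_succ_self m) hm
        rw [hrec m hm', Matrix.transpose_add, Matrix.transpose_smul, transpose_vecMulVec',
          ih (le_of_lt hm')]
  -- main claim for arbitrary vector v
  have key : ∀ i ≤ 2 * k, ∀ v : Fin n → ℝ, (C i)⁻¹ *ᵥ v = (C 0)⁻¹ *ᵥ v +
      ∑ j ∈ Finset.range i,
        ((-1 : ℝ) ^ j * (1 + (-1 : ℝ) ^ (j + 1) * (u j ⬝ᵥ (C j)⁻¹ *ᵥ u j))⁻¹
          * ((C j)⁻¹ *ᵥ u j ⬝ᵥ v)) • ((C j)⁻¹ *ᵥ u j) := by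
    intro i
    induction i with
    | zero => intro _ v; simp
    | succ m ih =>
        intro hm v
        have hm' : m < 2 * k := hm
        have step : (C (m + 1))⁻¹ *ᵥ v = (C m)⁻¹ *ᵥ v +
            ((-1 : ℝ) ^ m * (1 + (-1 : ℝ) ^ (m + 1) * (u m ⬝ᵥ (C m)⁻¹ *ᵥ u m))⁻¹
              * ((C m)⁻¹ *ᵥ u m ⬝ᵥ v)) • ((C m)⁻¹ *ᵥ u m) := by
          have hB : IsUnit (C m + ((-1 : ℝ) ^ (m + 1)) • vecMulVec (u m) (u m)) := by
            rw [← hrec m hm']; exact hinv (m + 1) hm'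
          have := sm_step (C m) ((-1 : ℝ) ^ (m + 1)) (u m) v
            (hinv m (le_of_lt hm')) (hsym m (le_of_lt hm')) hB (hden m hm')
          rw [hrec m hm', this]
          congr 2
          ring
        rw [step, ih (le_of_lt hm') v, Finset.sum_range_succ]
        abel
  intro i hi
  exact key i (le_of_lt hi) (u i)
end

section
/- Let B be symmetric positive definite, σ* ≥ 0, δ > 0, g ∈ ℝⁿ. If s* satisfies (B + σ*I)s* = -g, ‖s*‖ ≤ δ, and σ*(δ - ‖s*‖) = 0, then s* is a global minimizer of Q(s) = gᵀs + ½ sᵀBs over the ball {s : ‖s‖ ≤ δ}. -/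
/-!
With `A = B + σ I`, the equation `A s* = -g` says that `s*` is the unconstrained minimizer of the
convex model `s ↦ gᵀs + ½ sᵀAs`, and this model exceeds `Q` by `(σ/2)‖s‖²`. Hence for `‖s‖ ≤ δ`,
`Q(s) ≥ Q(s*) + (σ/2)(‖s*‖² - ‖s‖²) ≥ Q(s*) + (σ/2)(‖s*‖² - δ²)`, and complementarity
`σ(δ - ‖s*‖) = 0` makes the last term vanish.
-/

open Matrix

namespace Matrix

variable {ι R : Type*} [Fintype ι]

def quadraticModel [Field R] (g : ι → R) (A : Matrix ι ι R) (s : ι → R) : R :=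
  g ⬝ᵥ s + (1 / 2) * (s ⬝ᵥ A *ᵥ s)

theorem quadraticModel_eq_add_of_mulVec_eq_neg [Field R] [CharZero R] {A : Matrix ι ι R}
    (hA : A.IsSymm) {g x : ι → R} (hx : A *ᵥ x = -g) (s : ι → R) :
    quadraticModel g A s = quadraticModel g A x + (1 / 2) * ((s - x) ⬝ᵥ A *ᵥ (s - x)) := by
  have hsym : x ⬝ᵥ A *ᵥ s = s ⬝ᵥ A *ᵥ x := by
    rw [dotProduct_mulVec, ← mulVec_transpose, hA.eq, dotProduct_comm]
  have hg : g = -(A *ᵥ x) := by rw [hx, neg_neg]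
  simp only [quadraticModel, hg, neg_dotProduct, mulVec_sub, sub_dotProduct, dotProduct_sub,
    dotProduct_comm (A *ᵥ x), hsym]
  ring

theorem quadraticModel_add_smul_one [Field R] [DecidableEq ι] (g : ι → R) (A : Matrix ι ι R)
    (σ : R) (s : ι → R) :
    quadraticModel g (A + σ • 1) s = quadraticModel g A s + σ / 2 * (s ⬝ᵥ s) := by
  simp only [quadraticModel, add_mulVec, smul_mulVec, one_mulVec, dotProduct_add,
    dotProduct_smul, smul_eq_mul]
  ring

theorem quadraticModel_le_of_posSemidef_of_mulVec_eq_neg {A : Matrix ι ι ℝ} (hA : A.PosSemidef)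
    {g x : ι → ℝ} (hx : A *ᵥ x = -g) (s : ι → ℝ) :
    quadraticModel g A x ≤ quadraticModel g A s := by
  have hsymm : A.IsSymm := isHermitian_iff_isSymm.mp hA.isHermitian
  have hnonneg : 0 ≤ (s - x) ⬝ᵥ A *ᵥ (s - x) := by
    simpa using hA.dotProduct_mulVec_nonneg (s - x)
  rw [quadraticModel_eq_add_of_mulVec_eq_neg hsymm hx s]
  linarith

end Matrix

theorem trust_region_global_optimality_general {n : ℕ}
    (B : Matrix (Fin n) (Fin n) ℝ) (hB : B.PosDef)
    (g sstar : Fin n → ℝ) (σ δ : ℝ) (hσ : 0 ≤ σ)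
    (h1 : (B + σ • (1 : Matrix (Fin n) (Fin n) ℝ)) *ᵥ sstar = -g)
    (h3 : σ * (δ - Real.sqrt (sstar ⬝ᵥ sstar)) = 0) :
    ∀ s : Fin n → ℝ, Real.sqrt (s ⬝ᵥ s) ≤ δ →
      g ⬝ᵥ sstar + (1 / 2) * (sstar ⬝ᵥ B *ᵥ sstar) ≤
        g ⬝ᵥ s + (1 / 2) * (s ⬝ᵥ B *ᵥ s) := by
  intro s hs
  have hA : (B + σ • 1).PosSemidef := hB.posSemidef.add (PosSemidef.one.smul hσ)
  have hs2 : s ⬝ᵥ s ≤ δ ^ 2 := (Real.sqrt_le_iff.mp hs).2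
  have hcompl : σ * (sstar ⬝ᵥ sstar) = σ * δ ^ 2 := by
    have hsq := Real.sq_sqrt (by simpa using dotProduct_self_star_nonneg sstar)
    linear_combination (-(δ + Real.sqrt (sstar ⬝ᵥ sstar))) * h3 - σ * hsq
  have hmin := quadraticModel_le_of_posSemidef_of_mulVec_eq_neg hA h1 s
  rw [quadraticModel_add_smul_one, quadraticModel_add_smul_one] at hmin
  change quadraticModel g B sstar ≤ quadraticModel g B s
  linarith [mul_le_mul_of_nonneg_left hs2 hσ]

theorem trust_region_global_optimality {n : ℕ}
    (B : Matrix (Fin n) (Fin n) ℝ) (hB : B.PosDef)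
    (g sstar : Fin n → ℝ) (σ δ : ℝ) (hσ : 0 ≤ σ) (hδ : 0 < δ)
    (h1 : (B + σ • (1 : Matrix (Fin n) (Fin n) ℝ)) *ᵥ sstar = -g)
    (h2 : Real.sqrt (sstar ⬝ᵥ sstar) ≤ δ)
    (h3 : σ * (δ - Real.sqrt (sstar ⬝ᵥ sstar)) = 0) :
    ∀ s : Fin n → ℝ, Real.sqrt (s ⬝ᵥ s) ≤ δ →
      g ⬝ᵥ sstar + (1 / 2) * (sstar ⬝ᵥ B *ᵥ sstar) ≤
        g ⬝ᵥ s + (1 / 2) * (s ⬝ᵥ B *ᵥ s) :=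
  trust_region_global_optimality_general B hB g sstar σ δ hσ h1 h3
end
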